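/- Let H and G be finite simple graphs. If G contains no induced copy of H and G contains at most one triangle (at most one 3-clique), then G contains no copy of the augmented pattern H⁺, i.e., G is H⁺-free. -/

import Mathlib

/-!
Restrict a copy `ψ` of `H⁺` to the vertices of `H`. Every edge of `H` is kept; if some non-edge
`{a, b}` of `H` were mapped to an edge of `G`, then the images of the two vertices attached to
`{a, b}` would be two distinct common neighbours of that edge, giving two different triangles.
So the restriction is an induced copy of `H`.
-/

open SimpleGraph

/-- Vertex type of the augmented pattern `H⁺`: the vertices of `H` together with two new
vertices `(s, false)` and `(s, true)` for every non-edge `s = {u,v}` of `H`. -/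
abbrev AugVert {V : Type*} (H : SimpleGraph V) : Type _ :=
  V ⊕ ({s : Sym2 V // ¬ s.IsDiag ∧ s ∉ H.edgeSet} × Bool)

/-- The augmented pattern `H⁺`: all edges of `H`, together with, for each non-edge
`{u,v}` of `H`, the four edges joining `u` and `v` to the two new vertices
`(⟨{u,v},_⟩, false)` and `(⟨{u,v},_⟩, true)`. -/
def augment {V : Type*} (H : SimpleGraph V) : SimpleGraph (AugVert H) :=
  SimpleGraph.fromRel (fun x y =>
    match x, y with
    | Sum.inl a, Sum.inl b => H.Adj a b
    | Sum.inl a, Sum.inr p => a ∈ p.1.1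
    | _, _ => False)

namespace SimpleGraph

variable {U : Type*} {G : SimpleGraph U}

theorem not_adj_of_two_common_neighbors
    (htri : ∀ T₁ T₂ : Finset U, G.IsNClique 3 T₁ → G.IsNClique 3 T₂ → T₁ = T₂)
    {u v x y : U} (hux : G.Adj u x) (hvx : G.Adj v x) (huy : G.Adj u y) (hvy : G.Adj v y)
    (hxy : x ≠ y) : ¬ G.Adj u v := by
  classical
  intro huv
  have hx : x ∈ ({u, v, y} : Finset U) :=
    htri {u, v, x} {u, v, y} (is3Clique_triple_iff.2 ⟨huv, hux, hvx⟩)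
      (is3Clique_triple_iff.2 ⟨huv, huy, hvy⟩) ▸ by simp
  simp only [Finset.mem_insert, Finset.mem_singleton] at hx
  rcases hx with rfl | rfl | rfl
  exacts [G.irrefl hux, G.irrefl hvx, hxy rfl]

end SimpleGraph

section Augment

variable {V U : Type*} {H : SimpleGraph V}

theorem augment_adj_inl_inl {a b : V} :
    (augment H).Adj (.inl a) (.inl b) ↔ H.Adj a b := by
  simp only [augment, fromRel_adj, ne_eq, Sum.inl.injEq]
  exact ⟨fun ⟨_, h⟩ => h.elim id H.adj_symm, fun h => ⟨h.ne, .inl h⟩⟩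

theorem augment_adj_inl_inr {a : V} {s : {s : Sym2 V // ¬ s.IsDiag ∧ s ∉ H.edgeSet}} {i : Bool} :
    (augment H).Adj (.inl a) (.inr (s, i)) ↔ a ∈ s.1 := by
  simp [augment, fromRel_adj]

theorem adj_iff_adj_of_augment_copy {G : SimpleGraph U}
    (htri : ∀ T₁ T₂ : Finset U, G.IsNClique 3 T₁ → G.IsNClique 3 T₂ → T₁ = T₂)
    (ψ : augment H →g G) (hψ : Function.Injective ψ) (a b : V) :
    H.Adj a b ↔ G.Adj (ψ (.inl a)) (ψ (.inl b)) := by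
  refine ⟨fun h => ψ.map_adj (augment_adj_inl_inl.2 h), fun hG => ?_⟩
  by_contra hH
  have hab : a ≠ b := fun e => G.irrefl (e ▸ hG)
  let s : {s : Sym2 V // ¬ s.IsDiag ∧ s ∉ H.edgeSet} := ⟨s(a, b), by simpa, by simpa⟩
  have hapex (i : Bool) (c : V) (hc : c = a ∨ c = b) :
      G.Adj (ψ (.inl c)) (ψ (.inr (s, i))) :=
    ψ.map_adj (augment_adj_inl_inr.2 (by rcases hc with rfl | rfl <;> simp [s]))
  exact not_adj_of_two_common_neighbors htri (hapex false a (.inl rfl)) (hapex false b (.inr rfl))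
    (hapex true a (.inl rfl)) (hapex true b (.inr rfl)) (hψ.ne (by simp)) hG

end Augment

theorem induced_free_unique_triangle_augment_free_general {V U : Type*}
    (H : SimpleGraph V) (G : SimpleGraph U)
    (hfree : ¬ ∃ φ : V → U, Function.Injective φ ∧
      ∀ a b : V, H.Adj a b ↔ G.Adj (φ a) (φ b))
    (htri : ∀ T₁ T₂ : Finset U, G.IsNClique 3 T₁ → G.IsNClique 3 T₂ → T₁ = T₂) :
    ¬ ∃ ψ : augment H →g G, Function.Injective ψ := by
  rintro ⟨ψ, hψ⟩
  exact hfree ⟨fun a => ψ (.inl a), fun a b hab => Sum.inl_injective (hψ hab),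
    adj_iff_adj_of_augment_copy htri ψ hψ⟩

/-- If `G` contains no induced copy of `H` and has at most one triangle, then `G`
contains no copy of the augmented pattern `H⁺`. -/
theorem induced_free_unique_triangle_augment_free {V U : Type*} [Fintype V] [Fintype U]
    (H : SimpleGraph V) (G : SimpleGraph U)
    (hfree : ¬ ∃ φ : V → U, Function.Injective φ ∧
      ∀ a b : V, H.Adj a b ↔ G.Adj (φ a) (φ b))
    (htri : ∀ T₁ T₂ : Finset U, G.IsNClique 3 T₁ → G.IsNClique 3 T₂ → T₁ = T₂) :
    ¬ ∃ ψ : augment H →g G, Function.Injective ψ :=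
  induced_free_unique_triangle_augment_free_general H G hfree htri
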